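/- arXiv:2407.18052 — 2 statements merged into one kernel-verified Lean document; each statement's English description precedes it below -/
import Mathlib

section
/- Let f : ℝⁿ → ℝⁿ be continuously differentiable. The function C(u, v) = ‖v‖²/2 − ⟨f(u), v⟩ is constant along every solution of the system u' = −f(u) + v, v' = 2((Df(u))ᵀ − Df(u)) f(u) + (2Df(u) − (Df(u))ᵀ) v. -/
/-!
Along a solution write `A = Df(u)`, `b = f(u)`, `d = u' = v - b`. Differentiating,
`C' = ⟪v, v'⟫ - ⟪b, v'⟫ - ⟪A d, v⟫ = ⟪d, v'⟫ - ⟪A d, v⟫`, and expanding `v'` with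
`⟪x, Aᵀ y⟫ = ⟪A x, y⟫` everything cancels; the term `⟪b, (Aᵀ - A) b⟫` vanishes by skew-symmetry.
-/

open ContinuousLinearMap

open scoped RealInnerProductSpace

variable {E : Type*} [NormedAddCommGroup E] [InnerProductSpace ℝ E] [CompleteSpace E]

theorem inner_neg_add_adjoint_sub (A : E →L[ℝ] E) (b w : E) :
    ⟪-b + w, (2 : ℝ) • ((adjoint A - A) b) + ((2 : ℝ) • A - adjoint A) w⟫ = ⟪A (-b + w), w⟫ := by
  simp only [sub_apply, smul_apply, map_add, map_neg, inner_add_left, inner_add_right,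
    inner_neg_left, inner_sub_right, inner_smul_right, adjoint_inner_right]
  linarith [real_inner_comm (A b) b, real_inner_comm (A w) w, real_inner_comm (A b) w,
    real_inner_comm (A w) b]

theorem hasDerivAt_conservedQuantity {f : E → E} {u v : ℝ → E} {t : ℝ}
    (hf : DifferentiableAt ℝ f (u t))
    (hu : HasDerivAt u (-f (u t) + v t) t)
    (hv : HasDerivAt v
      ((2 : ℝ) • ((adjoint (fderiv ℝ f (u t)) - fderiv ℝ f (u t)) (f (u t)))
        + ((2 : ℝ) • fderiv ℝ f (u t) - adjoint (fderiv ℝ f (u t))) (v t)) t) :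
    HasDerivAt (fun t => ‖v t‖ ^ 2 / 2 - ⟪f (u t), v t⟫) 0 t := by
  have hfu := hf.hasFDerivAt.comp_hasDerivAt t hu
  refine ((hv.norm_sq.div_const 2).sub (hfu.inner ℝ hv)).congr_deriv ?_
  have hcancel := inner_neg_add_adjoint_sub (fderiv ℝ f (u t)) (f (u t)) (v t)
  rw [inner_add_left, inner_neg_left] at hcancel
  rw [Function.comp_apply]
  linarith

/-- `C(u, v) = ‖v‖²/2 − ⟨f(u), v⟩` is constant along every solution of
`u' = −f(u) + v`, `v' = 2((Df(u))ᵀ − Df(u)) f(u) + (2Df(u) − (Df(u))ᵀ) v`. -/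
theorem conserved_quantity_C {n : ℕ}
    (f : EuclideanSpace ℝ (Fin n) → EuclideanSpace ℝ (Fin n)) (hf : ContDiff ℝ 1 f)
    (u v : ℝ → EuclideanSpace ℝ (Fin n))
    (hu : ∀ t, HasDerivAt u (-f (u t) + v t) t)
    (hv : ∀ t, HasDerivAt v
      ((2 : ℝ) • ((ContinuousLinearMap.adjoint (fderiv ℝ f (u t)) - fderiv ℝ f (u t)) (f (u t)))
        + ((2 : ℝ) • fderiv ℝ f (u t) - ContinuousLinearMap.adjoint (fderiv ℝ f (u t))) (v t)) t)
    (s t : ℝ) :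
    ‖v s‖ ^ 2 / 2 - (inner ℝ (f (u s)) (v s) : ℝ) =
      ‖v t‖ ^ 2 / 2 - (inner ℝ (f (u t)) (v t) : ℝ) := by
  have hC τ := hasDerivAt_conservedQuantity (hf.differentiable one_ne_zero (u τ)) (hu τ) (hv τ)
  exact is_const_of_deriv_eq_zero (fun τ => (hC τ).differentiableAt) (fun τ => (hC τ).deriv) s t
end

section
/- The function u₁ : ℝ → ℝ² given by u₁(t) = (0, −e^t + √(e^{2t} + 1) − e^{−t} arcsinh(e^t)) is bounded on ℝ and solves the linear equation u₁' = −A(t) u₁ + v₁(t) − g(y₀(t)), where A(t) = Df(y₀(t)) with f(x) = (−x₁(x₁²−1), −x₂), y₀(t) = (−1/√(e^{2t}+1), 0), g(x) = (−x₂, 0), and the second component of the inhomogeneity v₁(t) − g(y₀(t)) equals v₁,₂(t) with v₁ the solution of v₁' = A(t)ᵀ v₁ + 2((Dg)ᵀ − Dg) f(y₀(t)). -/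
noncomputable section

/-- Builds a point of `EuclideanSpace ℝ (Fin 2)` from two coordinates. -/
def mk2 (a b : ℝ) : EuclideanSpace ℝ (Fin 2) := (WithLp.equiv 2 (Fin 2 → ℝ)).symm ![a, b]

/-- The vector field `f(x) = (−x₁(x₁² − 1), −x₂) = −∇V(x)`. -/
def fF (x : EuclideanSpace ℝ (Fin 2)) : EuclideanSpace ℝ (Fin 2) :=
  mk2 (-(x 0) * ((x 0) ^ 2 - 1)) (-(x 1))

/-- The perturbation `g(x) = (−x₂, 0)`. -/
def gF (x : EuclideanSpace ℝ (Fin 2)) : EuclideanSpace ℝ (Fin 2) := mk2 (-(x 1)) 0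

/-- The time-reversed heteroclinic `y₀(t) = (−1/√(e^{2t}+1), 0)`. -/
def y₀ (t : ℝ) : EuclideanSpace ℝ (Fin 2) := mk2 (-1 / Real.sqrt (Real.exp (2 * t) + 1)) 0

/-- The explicit first-order correction
`u₁(t) = (0, −e^t + √(e^{2t}+1) − e^{−t} arcsinh(e^t))`. -/
def u₁ (t : ℝ) : EuclideanSpace ℝ (Fin 2) :=
  mk2 0 (-Real.exp t + Real.sqrt (Real.exp (2 * t) + 1)
    - Real.exp (-t) * Real.arsinh (Real.exp t))

/-! Along `y₀` only the second coordinate matters: there `A(t)` acts as `-1`, `g(y₀) = 0`, and the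
forcing `2((Dg)ᵀ − Dg) f(y₀)` is `(0, 2 e^{2t} / (e^{2t} + 1)^{3/2})`. So with `v₁ = (0, v₁,₂)` both
equations reduce to the scalar ODEs `v' = −v + 2 e^{2t} / (e^{2t} + 1)^{3/2}` and `u' = u + v₁,₂`,
verified by differentiating the closed forms (`arsinh' x = 1 / √(1 + x²)`). Boundedness follows
from `0 ≤ arsinh x ≤ x` and `0 ≤ √(x² + 1) − x ≤ 1` for `x = e^t ≥ 0`. -/

open Real

@[simp] lemma mk2_apply_zero (a b : ℝ) : mk2 a b 0 = a := rfl

@[simp] lemma mk2_apply_one (a b : ℝ) : mk2 a b 1 = b := rfl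

lemma mk2_eta (x : EuclideanSpace ℝ (Fin 2)) : mk2 (x 0) (x 1) = x := by
  ext i; fin_cases i <;> rfl

lemma mk2_add (a b c d : ℝ) : mk2 a b + mk2 c d = mk2 (a + c) (b + d) := by
  ext i; fin_cases i <;> simp

lemma mk2_neg (a b : ℝ) : -mk2 a b = mk2 (-a) (-b) := by
  ext i; fin_cases i <;> simp

lemma smul_mk2 (r a b : ℝ) : r • mk2 a b = mk2 (r * a) (r * b) := by
  ext i; fin_cases i <;> simp

lemma mk2_zero_zero : mk2 0 0 = 0 := by
  ext i; fin_cases i <;> simp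

lemma norm_mk2_zero (b : ℝ) : ‖mk2 0 b‖ = |b| := by
  simp [EuclideanSpace.norm_eq, Fin.sum_univ_two, sqrt_sq_eq_abs]

lemma toEuclideanCLM_mk2 (M : Matrix (Fin 2) (Fin 2) ℝ) (a b : ℝ) :
    Matrix.toEuclideanCLM (𝕜 := ℝ) M (mk2 a b) =
      mk2 (M 0 0 * a + M 0 1 * b) (M 1 0 * a + M 1 1 * b) := by
  ext i; fin_cases i <;> simp [mk2]

lemma hasFDerivAt_mk2 {E : Type*} [NormedAddCommGroup E] [NormedSpace ℝ E]
    {c₀ c₁ : E → ℝ} {d₀ d₁ : E →L[ℝ] ℝ} {p : E}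
    (h₀ : HasFDerivAt c₀ d₀ p) (h₁ : HasFDerivAt c₁ d₁ p)
    {L : E →L[ℝ] EuclideanSpace ℝ (Fin 2)} (hL : ∀ w, L w = mk2 (d₀ w) (d₁ w)) :
    HasFDerivAt (fun x => mk2 (c₀ x) (c₁ x)) L p := by
  rw [← hasFDerivWithinAt_univ, hasFDerivWithinAt_piLp]
  intro i
  fin_cases i
  · exact h₀.hasFDerivWithinAt.congr_fderiv (by ext w; simp [hL])
  · exact h₁.hasFDerivWithinAt.congr_fderiv (by ext w; simp [hL])

lemma hasDerivAt_mk2 {a b : ℝ → ℝ} {a' b' t : ℝ} (ha : HasDerivAt a a' t)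
    (hb : HasDerivAt b b' t) :
    HasDerivAt (fun s => mk2 (a s) (b s)) (mk2 a' b') t :=
  hasFDerivAt_mk2 ha hb fun w => by simp [smul_mk2]

lemma Matrix.adjoint_toEuclideanCLM {𝕜 n : Type*} [RCLike 𝕜] [Fintype n] [DecidableEq n]
    (A : Matrix n n 𝕜) :
    ContinuousLinearMap.adjoint (Matrix.toEuclideanCLM (𝕜 := 𝕜) A) =
      Matrix.toEuclideanCLM (𝕜 := 𝕜) A.conjTranspose := by
  rw [← ContinuousLinearMap.star_eq_adjoint, ← map_star, Matrix.star_eq_conjTranspose]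

def jacobianF (a : ℝ) : Matrix (Fin 2) (Fin 2) ℝ := !![1 - 3 * a ^ 2, 0; 0, -1]

def jacobianG : Matrix (Fin 2) (Fin 2) ℝ := !![0, -1; 0, 0]

lemma hasFDerivAt_fF (p : EuclideanSpace ℝ (Fin 2)) :
    HasFDerivAt fF (Matrix.toEuclideanCLM (𝕜 := ℝ) (jacobianF (p 0))) p := by
  have hcubic (y : ℝ) : HasDerivAt (fun y : ℝ => -y * (y ^ 2 - 1)) (1 - 3 * y ^ 2) y :=
    ((hasDerivAt_neg y).mul ((hasDerivAt_pow 2 y).sub_const 1)).congr_deriv (by ring)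
  refine hasFDerivAt_mk2 ((hcubic (p 0)).comp_hasFDerivAt p (PiLp.hasFDerivAt_apply 2 p 0))
    (PiLp.hasFDerivAt_apply 2 p 1).neg fun w => ?_
  rw [← mk2_eta w, toEuclideanCLM_mk2]
  simp [jacobianF]

lemma fderiv_fF (p : EuclideanSpace ℝ (Fin 2)) :
    fderiv ℝ fF p = Matrix.toEuclideanCLM (𝕜 := ℝ) (jacobianF (p 0)) :=
  (hasFDerivAt_fF p).fderiv

lemma gF_eq_toEuclideanCLM : gF = Matrix.toEuclideanCLM (𝕜 := ℝ) jacobianG := by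
  funext x
  rw [← mk2_eta x, toEuclideanCLM_mk2]
  simp [gF, jacobianG]

lemma fderiv_gF (p : EuclideanSpace ℝ (Fin 2)) :
    fderiv ℝ gF p = Matrix.toEuclideanCLM (𝕜 := ℝ) jacobianG := by
  rw [gF_eq_toEuclideanCLM, ContinuousLinearMap.fderiv]

lemma neg_fderiv_fF_apply_mk2_zero (p : EuclideanSpace ℝ (Fin 2)) (u : ℝ) :
    -(fderiv ℝ fF p) (mk2 0 u) = mk2 0 u := by
  rw [fderiv_fF, toEuclideanCLM_mk2, mk2_neg]
  simp [jacobianF]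

lemma gF_mk2_zero (a : ℝ) : gF (mk2 a 0) = 0 := by
  simp [gF, mk2_zero_zero]

lemma adjoint_fderiv_fF_add_forcing (a v : ℝ) :
    ContinuousLinearMap.adjoint (fderiv ℝ fF (mk2 a 0)) (mk2 0 v)
        + (2 : ℝ) • ((ContinuousLinearMap.adjoint (fderiv ℝ gF (mk2 a 0))
          - fderiv ℝ gF (mk2 a 0)) (fF (mk2 a 0)))
      = mk2 0 (-v + 2 * a * (a ^ 2 - 1)) := by
  rw [fderiv_fF, fderiv_gF, Matrix.adjoint_toEuclideanCLM, Matrix.adjoint_toEuclideanCLM,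
    ← map_sub, fF, toEuclideanCLM_mk2, toEuclideanCLM_mk2, smul_mk2, mk2_add]
  congr 1 <;> simp [jacobianF, jacobianG]; ring

lemma exp_two_mul_eq_sq (t : ℝ) : exp (2 * t) = exp t ^ 2 := by
  rw [← exp_nat_mul]; norm_num

lemma hasDerivAt_sqrt_exp_two_mul_add_one (t : ℝ) :
    HasDerivAt (fun s => √(exp (2 * s) + 1)) (exp (2 * t) / √(exp (2 * t) + 1)) t := by
  refine ((((hasDerivAt_id' t).const_mul 2).exp.add_const 1).sqrt (by positivity)).congr_deriv ?_
  field_simp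

lemma hasDerivAt_arsinh_exp (t : ℝ) :
    HasDerivAt (fun s => arsinh (exp s)) (exp t / √(exp (2 * t) + 1)) t := by
  refine (hasDerivAt_exp t).arsinh.congr_deriv ?_
  rw [exp_two_mul_eq_sq, add_comm, div_eq_inv_mul, smul_eq_mul]

lemma hasDerivAt_exp_neg_mul_arsinh_exp (t : ℝ) :
    HasDerivAt (fun s => exp (-s) * arsinh (exp s))
      (-(exp (-t) * arsinh (exp t)) + 1 / √(exp (2 * t) + 1)) t := by
  refine ((hasDerivAt_neg t).exp.mul (hasDerivAt_arsinh_exp t)).congr_deriv ?_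
  rw [exp_neg]
  field_simp

/-- Closed form of `2 e^{-t} ∫_{-∞}^t e^s ḣ₁(-s) ds` with `ḣ₁(-s) = e^{2s} / (e^{2s} + 1)^{3/2}`. -/
def v₁₂ (t : ℝ) : ℝ := 2 * exp (-t) * arsinh (exp t) - 2 / √(exp (2 * t) + 1)

def u₁₂ (t : ℝ) : ℝ := -exp t + √(exp (2 * t) + 1) - exp (-t) * arsinh (exp t)

lemma hasDerivAt_v₁₂ (t : ℝ) :
    HasDerivAt v₁₂ (-v₁₂ t + 2 * exp (2 * t) / √(exp (2 * t) + 1) ^ 3) t := by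
  have hq : 0 < √(exp (2 * t) + 1) := by positivity
  have h := ((hasDerivAt_exp_neg_mul_arsinh_exp t).const_mul 2).sub
    ((hasDerivAt_const t (2 : ℝ)).div (hasDerivAt_sqrt_exp_two_mul_add_one t) hq.ne')
  refine (h.congr_deriv ?_).congr_of_eventuallyEq (.of_forall fun s => by simp only [v₁₂, mul_assoc]; rfl)
  simp only [v₁₂]
  field_simp
  ring

lemma hasDerivAt_u₁₂ (t : ℝ) : HasDerivAt u₁₂ (u₁₂ t + v₁₂ t) t := by
  have hsq : √(exp (2 * t) + 1) ^ 2 = exp (2 * t) + 1 := sq_sqrt (by positivity)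
  have h := ((hasDerivAt_exp t).neg.add (hasDerivAt_sqrt_exp_two_mul_add_one t)).sub
    (hasDerivAt_exp_neg_mul_arsinh_exp t)
  refine h.congr_deriv ?_
  simp only [u₁₂, v₁₂]
  field_simp
  linear_combination (-1) * hsq

lemma arsinh_le_self {x : ℝ} (hx : 0 ≤ x) : arsinh x ≤ x := by
  rw [← sinh_le_sinh, sinh_arsinh]
  exact self_le_sinh_iff.2 hx

lemma exp_neg_mul_arsinh_exp_mem_Icc (t : ℝ) : exp (-t) * arsinh (exp t) ∈ Set.Icc 0 1 := by
  have hexp : 0 ≤ exp t := (exp_pos t).le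
  refine ⟨mul_nonneg (exp_pos _).le (arsinh_nonneg_iff.2 hexp), ?_⟩
  calc exp (-t) * arsinh (exp t) ≤ exp (-t) * exp t := by gcongr; exact arsinh_le_self hexp
    _ = 1 := by rw [← exp_add, neg_add_cancel, exp_zero]

lemma sqrt_sq_add_one_sub_self_mem_Icc {x : ℝ} (hx : 0 ≤ x) : √(x ^ 2 + 1) - x ∈ Set.Icc 0 1 := by
  have hlow : x ≤ √(x ^ 2 + 1) := le_sqrt_of_sq_le (by linarith)
  have hup : √(x ^ 2 + 1) ≤ x + 1 := sqrt_le_iff.2 ⟨by linarith, by nlinarith⟩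
  constructor <;> linarith

lemma abs_v₁₂_le (t : ℝ) : |v₁₂ t| ≤ 2 := by
  obtain ⟨hw₀, hw₁⟩ := exp_neg_mul_arsinh_exp_mem_Icc t
  have hq : 1 ≤ √(exp (2 * t) + 1) := one_le_sqrt.2 (by linarith [exp_pos (2 * t)])
  have hinv₀ : 0 ≤ 2 / √(exp (2 * t) + 1) := by positivity
  have hinv₁ : 2 / √(exp (2 * t) + 1) ≤ 2 := div_le_self zero_le_two hq
  rw [v₁₂, mul_assoc, abs_sub_le_iff]
  constructor <;> linarith

lemma abs_u₁₂_le (t : ℝ) : |u₁₂ t| ≤ 1 := by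
  obtain ⟨hw₀, hw₁⟩ := exp_neg_mul_arsinh_exp_mem_Icc t
  obtain ⟨hr₀, hr₁⟩ := sqrt_sq_add_one_sub_self_mem_Icc (exp_pos t).le
  rw [u₁₂, exp_two_mul_eq_sq, abs_le]
  constructor <;> linarith

lemma y₀_eq_mk2 (t : ℝ) : y₀ t = mk2 (y₀ t 0) 0 := rfl

lemma two_mul_y₀_mul_sq_sub_one (t : ℝ) :
    2 * y₀ t 0 * (y₀ t 0 ^ 2 - 1) = 2 * exp (2 * t) / √(exp (2 * t) + 1) ^ 3 := by
  have hsq : √(exp (2 * t) + 1) ^ 2 = exp (2 * t) + 1 := sq_sqrt (by positivity)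
  simp only [y₀, mk2_apply_zero]
  field_simp
  linear_combination hsq

/-- `u₁` is bounded on `ℝ` and solves
`u₁' = −A(t) u₁ + v₁(t) − g(y₀(t))` with `A(t) = Df(y₀(t))`, where `v₁` is the bounded
solution of `v₁' = A(t)ᵀ v₁ + 2((Dg)ᵀ − Dg) f(y₀(t))`; moreover the second component of
the inhomogeneity `v₁ − g(y₀)` is `v₁,₂`. -/
theorem u₁_bounded_and_solves :
    ∃ v₁ : ℝ → EuclideanSpace ℝ (Fin 2),
      (∀ t, HasDerivAt v₁
        (ContinuousLinearMap.adjoint (fderiv ℝ fF (y₀ t)) (v₁ t)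
          + (2 : ℝ) • ((ContinuousLinearMap.adjoint (fderiv ℝ gF (y₀ t))
              - fderiv ℝ gF (y₀ t)) (fF (y₀ t)))) t) ∧
      (∃ M, ∀ t, ‖v₁ t‖ ≤ M) ∧
      (∀ t, (v₁ t - gF (y₀ t)) 1 = v₁ t 1) ∧
      (∀ t, HasDerivAt u₁ (-(fderiv ℝ fF (y₀ t)) (u₁ t) + v₁ t - gF (y₀ t)) t) ∧
      (∃ M, ∀ t, ‖u₁ t‖ ≤ M) := by
  have hu₁ : u₁ = fun t => mk2 0 (u₁₂ t) := rfl
  refine ⟨fun t => mk2 0 (v₁₂ t), fun t => ?_, ⟨2, fun t => ?_⟩, fun t => ?_, fun t => ?_,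
    ⟨1, fun t => ?_⟩⟩
  · rw [y₀_eq_mk2, adjoint_fderiv_fF_add_forcing, two_mul_y₀_mul_sq_sub_one]
    exact hasDerivAt_mk2 (hasDerivAt_const t 0) (hasDerivAt_v₁₂ t)
  · rw [norm_mk2_zero]
    exact abs_v₁₂_le t
  · rw [y₀_eq_mk2, gF_mk2_zero, sub_zero]
  · rw [hu₁, neg_fderiv_fF_apply_mk2_zero, y₀_eq_mk2, gF_mk2_zero, sub_zero, mk2_add, zero_add]
    exact hasDerivAt_mk2 (hasDerivAt_const t 0) (hasDerivAt_u₁₂ t)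
  · rw [hu₁, norm_mk2_zero]
    exact abs_u₁₂_le t

end
end
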